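/- Assume QV = ρωV with ρ > 0, |ω| = 1, and hypothesis (jsr_λ) with λ < ρ. Then the unique continuous solution F of the basic dilation equation is Hölder with exponent log_B(ρ/λ): there is a constant c ≥ 0 such that ‖F(y) − F(x)‖ ≤ c |y − x|^{log_B(ρ/λ)} for all x, y ∈ [0,1]. -/

import Mathlib

open scoped Classical BigOperators
open Filter Asymptotics

attribute [local instance] Matrix.linftyOpNormedAddCommGroup Matrix.linftyOpNormedRing

noncomputable section

def wordProd {B d : ℕ} (A : Fin B → Matrix (Fin d) (Fin d) ℂ) {K : ℕ}
    (w : Fin K → Fin B) : Matrix (Fin d) (Fin d) ℂ :=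
  ((List.ofFn w).map A).prod

def wordVal {B K : ℕ} (w : Fin K → Fin B) : ℝ :=
  ∑ k : Fin K, (w k : ℝ) / (B : ℝ) ^ ((k : ℕ) + 1)

def runSum {B d : ℕ} (A : Fin B → Matrix (Fin d) (Fin d) ℂ) (C : Fin d → ℂ)
    (K : ℕ) (x : ℝ) : Fin d → ℂ :=
  ∑ w : Fin K → Fin B, if wordVal w ≤ x then (wordProd A w).mulVec C else 0

def DilationEq {B d : ℕ} (A : Fin B → Matrix (Fin d) (Fin d) ℂ) (ρ : ℝ) (ω : ℂ)
    (V : Fin d → ℂ) (Φ : ℝ → Fin d → ℂ) : Prop :=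
  Φ 0 = 0 ∧ Φ 1 = V ∧
    ∀ r : Fin B, ∀ x : ℝ, (r : ℝ) / B ≤ x → x < ((r : ℝ) + 1) / B →
      Φ x = ((ρ : ℂ) * ω)⁻¹ •
        ((∑ s ∈ Finset.univ.filter fun s : Fin B => s < r, (A s).mulVec V) +
          (A r).mulVec (Φ (B * x - r)))

/-! With `μ = ρω`, the solution is the limit of `F_K(x) = μ⁻ᴷ S_K(x)`, where `S_K = runSum A V K`.
Splitting off the last digit, `S_{K+1}(x)` and `μ S_K(x) = Σ_w [0.w ≤ x] A_w Q V` differ only in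
the at most `B` words of length `K + 1` whose value lies in `(x, x + B⁻ᴷ]`, so
`‖F_{K+1} - F_K‖ = O((λ/ρ)ᴷ)` by (jsr_λ); splitting off the first digit shows that the limit solves
the dilation equation. Distinct words of length `K` have values at least `B⁻ᴷ` apart, so `S_K` has at
most one jump on an interval of length `B⁻ᴷ`; hence `‖F y - F x‖ = O((λ/ρ)ᴷ) = O(B^{-Kα})` when
`|y - x| ≤ B⁻ᴷ`, which is the Hölder bound with `α = log_B(ρ/λ)`. For uniqueness, the difference of
two continuous solutions at `x` equals `μ⁻ᴷ A_w` applied to one of its own values, so it is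
`O((λ/ρ)ᴷ)` for every `K`. -/

open scoped Finset Matrix Topology

section Words

variable {B d K : ℕ}

@[simp]
lemma wordProd_zero (A : Fin B → Matrix (Fin d) (Fin d) ℂ) (w : Fin 0 → Fin B) :
    wordProd A w = 1 := by
  simp [wordProd]

lemma wordProd_cons (A : Fin B → Matrix (Fin d) (Fin d) ℂ) (r : Fin B) (w : Fin K → Fin B) :
    wordProd A (Fin.cons r w) = A r * wordProd A w := by
  simp [wordProd, List.ofFn_succ]

lemma wordProd_snoc (A : Fin B → Matrix (Fin d) (Fin d) ℂ) (w : Fin K → Fin B) (s : Fin B) :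
    wordProd A (Fin.snoc w s) = wordProd A w * A s := by
  rw [wordProd, List.ofFn_succ']
  simp [wordProd, List.concat_eq_append]

lemma wordProd_append {m n : ℕ} (A : Fin B → Matrix (Fin d) (Fin d) ℂ) (u : Fin m → Fin B)
    (v : Fin n → Fin B) : wordProd A (Fin.append u v) = wordProd A u * wordProd A v := by
  simp [wordProd, List.ofFn_fin_append]

lemma sum_wordProd (A : Fin B → Matrix (Fin d) (Fin d) ℂ) (K : ℕ) :
    ∑ w : Fin K → Fin B, wordProd A w = (∑ r, A r) ^ K := by
  induction K with
  | zero => simp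
  | succ K ih =>
    rw [← (Fin.consEquiv fun _ => Fin B).sum_comp, Fintype.sum_prod_type, pow_succ', ← ih,
      Finset.sum_mul]
    simp [Fin.consEquiv, wordProd_cons, Finset.mul_sum]

lemma wordVal_nonneg (w : Fin K → Fin B) : 0 ≤ wordVal w :=
  Finset.sum_nonneg fun _ _ => by positivity

lemma wordVal_cons (r : Fin B) (w : Fin K → Fin B) :
    wordVal (Fin.cons r w) = ((r : ℝ) + wordVal w) / B := by
  simp only [wordVal, Fin.sum_univ_succ, Fin.cons_zero, Fin.cons_succ, Fin.val_succ, add_div,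
    Finset.sum_div, div_div, pow_succ]
  simp

lemma wordVal_snoc (w : Fin K → Fin B) (s : Fin B) :
    wordVal (Fin.snoc w s) = wordVal w + (s : ℝ) / (B : ℝ) ^ (K + 1) := by
  simp [wordVal, Fin.sum_univ_castSucc]

/-- The integer `B ^ K * wordVal w`, i.e. `w` read as a base-`B` numeral. -/
def wordNum (w : Fin K → Fin B) : ℕ := finFunctionFinEquiv (w ∘ Fin.rev)

lemma wordNum_injective : Function.Injective (wordNum (B := B) (K := K)) := fun w v h => by
  funext i
  simpa using congrFun (finFunctionFinEquiv.injective (Fin.val_injective h)) (Fin.rev i)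

lemma wordNum_lt (w : Fin K → Fin B) : wordNum w < B ^ K :=
  (finFunctionFinEquiv (w ∘ Fin.rev)).is_lt

lemma wordNum_cast (hB : 0 < B) (w : Fin K → Fin B) :
    (wordNum w : ℝ) = (B : ℝ) ^ K * wordVal w := by
  rw [wordNum, finFunctionFinEquiv_apply, wordVal, Finset.mul_sum,
    ← Equiv.sum_comp Fin.revPerm]
  push_cast
  refine Finset.sum_congr rfl fun k _ => ?_
  have hk : (B : ℝ) ^ K = (B : ℝ) ^ ((k : ℕ) + 1) * (B : ℝ) ^ (K - ((k : ℕ) + 1)) := by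
    rw [← pow_add]
    congr 1
    omega
  rw [Function.comp_apply, Fin.revPerm_apply, Fin.rev_rev, Fin.val_rev, hk]
  field_simp

lemma wordVal_lt_one (hB : 0 < B) (w : Fin K → Fin B) : wordVal w < 1 := by
  rw [← mul_lt_mul_iff_right₀ (pow_pos (Nat.cast_pos.mpr hB) K), mul_one, ← wordNum_cast hB]
  exact_mod_cast wordNum_lt w

lemma card_wordVal_mem_Ioc_le (hB : 0 < B) (a : ℝ) (n : ℕ) :
    #{w : Fin K → Fin B | wordVal w ∈ Set.Ioc a (a + n / (B : ℝ) ^ K)} ≤ n := by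
  have hBK : (0 : ℝ) < (B : ℝ) ^ K := by positivity
  set t : ℤ := ⌊(B : ℝ) ^ K * a⌋
  calc #{w : Fin K → Fin B | wordVal w ∈ Set.Ioc a (a + n / (B : ℝ) ^ K)}
      ≤ #(Finset.Ioc t (t + n)) := by
        refine Finset.card_le_card_of_injOn (fun w => (wordNum w : ℤ)) (fun w hw => ?_)
          (fun w _ v _ h => wordNum_injective (by simpa using h))
        replace hw : a < wordVal w ∧ wordVal w ≤ a + n / (B : ℝ) ^ K := by simpa using hw
        have hw' := wordNum_cast hB w
        rw [Finset.coe_Ioc, Set.mem_Ioc]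
        constructor
        · rw [Int.floor_lt]
          push_cast
          rw [hw']
          exact mul_lt_mul_of_pos_left hw.1 hBK
        · rw [← sub_le_iff_le_add, Int.le_floor]
          push_cast
          rw [hw']
          have := mul_le_mul_of_nonneg_left hw.2 hBK.le
          rw [mul_add, mul_div_cancel₀ _ hBK.ne'] at this
          linarith
    _ = n := by simp

end Words

section JointSpectralRadius

variable {B d : ℕ} (A : Fin B → Matrix (Fin d) (Fin d) ℂ)

lemma Matrix.linfty_opNorm_one_le : ‖(1 : Matrix (Fin d) (Fin d) ℂ)‖ ≤ 1 := by
  rw [← Matrix.diagonal_one, Matrix.linfty_opNorm_diagonal]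
  exact (pi_norm_le_iff_of_nonneg zero_le_one).mpr fun _ => (norm_one (α := ℂ)).le

lemma norm_wordProd_le_pow {m : ℝ} (hm : ∀ r, ‖A r‖ ≤ m) :
    ∀ {K : ℕ} (w : Fin K → Fin B), ‖wordProd A w‖ ≤ m ^ K
  | 0, _ => by simpa using Matrix.linfty_opNorm_one_le
  | K + 1, w => by
    rw [← Fin.cons_self_tail w, wordProd_cons, pow_succ']
    exact (norm_mul_le _ _).trans <| mul_le_mul (hm _) (norm_wordProd_le_pow hm _)
      (norm_nonneg _) ((norm_nonneg _).trans (hm (w 0)))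

lemma exists_norm_wordProd_le {lam : ℝ} (hlam : 0 < lam) {T : ℕ} (hT : 1 ≤ T)
    (hjsr : ∀ w : Fin T → Fin B, ‖wordProd A w‖ ≤ lam ^ T) :
    ∃ C₀ : ℝ, ∀ (K : ℕ) (w : Fin K → Fin B), ‖wordProd A w‖ ≤ C₀ * lam ^ K := by
  set m : ℝ := ∑ r, ‖A r‖
  have hm (r : Fin B) : ‖A r‖ ≤ m := Finset.single_le_sum (fun i _ => norm_nonneg (A i))
    (Finset.mem_univ r)
  set c : ℝ := max 1 (m / lam)
  have hc : 1 ≤ c := le_max_left _ _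
  refine ⟨c ^ T, fun K => ?_⟩
  induction K using Nat.strong_induction_on with
  | _ K ih =>
    intro w
    rcases lt_or_ge K T with hKT | hTK
    · calc ‖wordProd A w‖ ≤ m ^ K := norm_wordProd_le_pow A hm w
        _ = (m / lam) ^ K * lam ^ K := by rw [div_pow, div_mul_cancel₀ _ (by positivity)]
        _ ≤ c ^ T * lam ^ K := by
          gcongr
          calc (m / lam) ^ K ≤ c ^ K := pow_le_pow_left₀
                (div_nonneg (Finset.sum_nonneg fun r _ => norm_nonneg (A r)) hlam.le)
                (le_max_right _ _) K
            _ ≤ c ^ T := pow_le_pow_right₀ hc hKT.le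
    · obtain ⟨n, rfl⟩ := Nat.exists_eq_add_of_le hTK
      rw [← Fin.append_castAdd_natAdd (f := w), wordProd_append, pow_add]
      calc _ ≤ lam ^ T * (c ^ T * lam ^ n) :=
            (norm_mul_le _ _).trans (mul_le_mul (hjsr _) (ih n (by omega) _) (norm_nonneg _)
              (by positivity))
        _ = c ^ T * (lam ^ T * lam ^ n) := by ring

end JointSpectralRadius

lemma norm_sum_ite_sub_ite_le {ι E : Type*} [Fintype ι] [SeminormedAddCommGroup E]
    (p q : ι → Prop) [DecidablePred p] [DecidablePred q] (f : ι → E) {M : ℝ}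
    (hM : ∀ i, ‖f i‖ ≤ M) :
    ‖∑ i, ((if p i then f i else 0) - (if q i then f i else 0))‖ ≤ #{i | ¬(p i ↔ q i)} * M := by
  rw [← Finset.sum_filter_of_ne (p := fun i => ¬(p i ↔ q i)) fun i _ h hpq => h (by
    simp [hpq])]
  refine (norm_sum_le _ _).trans ((Finset.sum_le_card_nsmul _ _ _ fun i _ => ?_).trans_eq
    (nsmul_eq_mul _ _))
  split_ifs <;> simp [hM i, (norm_nonneg _).trans (hM i)]

section RunSum

variable {B d : ℕ} (A : Fin B → Matrix (Fin d) (Fin d) ℂ) (C : Fin d → ℂ) {K : ℕ}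

lemma runSum_of_neg {x : ℝ} (hx : x < 0) : runSum A C K x = 0 :=
  Finset.sum_eq_zero fun w _ => if_neg (hx.trans_le (wordVal_nonneg w)).not_ge

lemma runSum_of_one_le (hB : 0 < B) {x : ℝ} (hx : 1 ≤ x) :
    runSum A C K x = ((∑ r, A r) ^ K) *ᵥ C := by
  rw [← sum_wordProd, Matrix.sum_mulVec]
  exact Finset.sum_congr rfl fun w _ => if_pos ((wordVal_lt_one hB w).le.trans hx)

lemma runSum_smul (c : ℂ) (x : ℝ) : runSum A (c • C) K x = c • runSum A C K x := by
  simp only [runSum, Finset.smul_sum, smul_ite, smul_zero, Matrix.mulVec_smul]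

lemma runSum_succ (hB : 0 < B) (x : ℝ) :
    runSum A C (K + 1) x = ∑ s, A s *ᵥ runSum A C K (B * x - s) := by
  have hB' : (0 : ℝ) < B := by exact_mod_cast hB
  rw [runSum, ← (Fin.consEquiv fun _ => Fin B).sum_comp, Fintype.sum_prod_type]
  refine Finset.sum_congr rfl fun s _ => ?_
  simp only [runSum, Matrix.mulVec_sum]
  refine Finset.sum_congr rfl fun w _ => ?_
  simp only [Fin.consEquiv, Equiv.coe_fn_mk, wordVal_cons, wordProd_cons, div_le_iff₀ hB',
    le_sub_iff_add_le, mul_comm x, add_comm (wordVal w), ← Matrix.mulVec_mulVec]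
  split_ifs <;> simp

lemma runSum_succ_of_mem (hB : 0 < B) (r : Fin B) {x : ℝ} (hr : (r : ℝ) / B ≤ x)
    (hr' : x < ((r : ℝ) + 1) / B) :
    runSum A C (K + 1) x = ∑ s ∈ Finset.univ.filter (· < r), A s *ᵥ ((∑ r, A r) ^ K *ᵥ C) +
      A r *ᵥ runSum A C K (B * x - r) := by
  have hB' : (0 : ℝ) < B := by exact_mod_cast hB
  rw [div_le_iff₀ hB'] at hr
  rw [lt_div_iff₀ hB'] at hr'
  rw [runSum_succ A C hB, ← Finset.sum_filter_add_sum_filter_not _ (· < r),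
    ← Finset.add_sum_erase _ _ (by simp : r ∈ Finset.univ.filter (¬ · < r))]
  congr 1
  · refine Finset.sum_congr rfl fun s hs => ?_
    have hs : (s : ℝ) + 1 ≤ r := by exact_mod_cast (Finset.mem_filter.mp hs).2
    rw [runSum_of_one_le A C hB (by linarith)]
  · rw [add_eq_left]
    refine Finset.sum_eq_zero fun s hs => ?_
    obtain ⟨hsr, hs⟩ := Finset.mem_erase.mp hs
    have hs : (r : ℝ) + 1 ≤ s := by
      exact_mod_cast Nat.lt_of_le_of_ne (not_lt.mp (Finset.mem_filter.mp hs).2)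
        (Fin.val_ne_of_ne hsr.symm)
    rw [runSum_of_neg A C (by linarith), Matrix.mulVec_zero]

lemma norm_runSum_sub_le (hB : 0 < B) {M : ℝ} (hM : ∀ w : Fin K → Fin B, ‖wordProd A w *ᵥ C‖ ≤ M)
    {x y : ℝ} (hxy : x ≤ y) (hyx : y - x ≤ ((B : ℝ) ^ K)⁻¹) :
    ‖runSum A C K y - runSum A C K x‖ ≤ M := by
  rw [runSum, runSum, ← Finset.sum_sub_distrib]
  refine (norm_sum_ite_sub_ite_le _ _ _ hM).trans ?_
  have hcard : #{w : Fin K → Fin B | ¬(wordVal w ≤ y ↔ wordVal w ≤ x)} ≤ 1 := by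
    refine (Finset.card_le_card fun w hw => ?_).trans (card_wordVal_mem_Ioc_le hB x 1)
    simp only [Finset.mem_filter, Finset.mem_univ, true_and, Set.mem_Ioc] at hw ⊢
    have hwx : x < wordVal w := not_le.mp fun h => hw (iff_of_true (h.trans hxy) h)
    have hwy : wordVal w ≤ y := by_contra fun h => hw (iff_of_false h fun h' => h (h'.trans hxy))
    exact ⟨hwx, by rw [Nat.cast_one, one_div]; linarith⟩
  have hM0 : 0 ≤ M := (norm_nonneg _).trans (hM fun _ => ⟨0, hB⟩)
  simpa using mul_le_mul_of_nonneg_right (Nat.cast_le (α := ℝ) |>.mpr hcard) hM0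

lemma runSum_mulVec_eq_sum_init (x : ℝ) :
    runSum A ((∑ r, A r) *ᵥ C) K x =
      ∑ u : Fin (K + 1) → Fin B, if wordVal (Fin.init u) ≤ x then wordProd A u *ᵥ C else 0 := by
  rw [runSum, ← (Fin.snocEquiv fun _ => Fin B).sum_comp, Fintype.sum_prod_type,
    Finset.sum_comm]
  refine Finset.sum_congr rfl fun w _ => ?_
  simp only [Fin.snocEquiv, Equiv.coe_fn_mk, Fin.init_snoc, wordProd_snoc,
    ← Matrix.mulVec_mulVec, Matrix.sum_mulVec, Matrix.mulVec_sum]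
  split_ifs <;> simp

lemma norm_runSum_succ_sub_le (hB : 0 < B) {M : ℝ}
    (hM : ∀ w : Fin (K + 1) → Fin B, ‖wordProd A w *ᵥ C‖ ≤ M) (x : ℝ) :
    ‖runSum A C (K + 1) x - runSum A ((∑ r, A r) *ᵥ C) K x‖ ≤ B * M := by
  rw [runSum_mulVec_eq_sum_init, runSum, ← Finset.sum_sub_distrib]
  refine (norm_sum_ite_sub_ite_le _ _ _ hM).trans ?_
  have hcard : #{u : Fin (K + 1) → Fin B | ¬(wordVal u ≤ x ↔ wordVal (Fin.init u) ≤ x)} ≤ B := by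
    refine (Finset.card_le_card fun u hu => ?_).trans (card_wordVal_mem_Ioc_le hB x B)
    simp only [Finset.mem_filter, Finset.mem_univ, true_and, Set.mem_Ioc] at hu ⊢
    have hlast : ((u (Fin.last K) : ℕ) : ℝ) < B := by exact_mod_cast (u (Fin.last K)).is_lt
    have hval := wordVal_snoc (Fin.init u) (u (Fin.last K))
    rw [Fin.snoc_init_self] at hval
    have hdigit : 0 ≤ ((u (Fin.last K) : ℕ) : ℝ) / (B : ℝ) ^ (K + 1) := by positivity
    have hdigit' : ((u (Fin.last K) : ℕ) : ℝ) / (B : ℝ) ^ (K + 1) ≤ B / (B : ℝ) ^ (K + 1) :=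
      div_le_div_of_nonneg_right hlast.le (by positivity)
    have hux : x < wordVal u := not_le.mp fun h => hu (iff_of_true h (by linarith))
    have hinit : wordVal (Fin.init u) ≤ x := by_contra fun h => hu (iff_of_false (by linarith) h)
    exact ⟨hux, by linarith⟩
  have hM0 : 0 ≤ M := (norm_nonneg _).trans (hM fun _ => ⟨0, hB⟩)
  exact mul_le_mul_of_nonneg_right (by exact_mod_cast hcard) hM0

end RunSum

lemma Matrix.pow_mulVec_of_mulVec_eq_smul {n R : Type*} [Fintype n] [DecidableEq n] [CommRing R]
    {M : Matrix n n R} {v : n → R} {c : R} (h : M *ᵥ v = c • v) (K : ℕ) :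
    (M ^ K) *ᵥ v = c ^ K • v := by
  induction K with
  | zero => simp
  | succ K ih => rw [pow_succ', ← Matrix.mulVec_mulVec, ih, Matrix.mulVec_smul, h, smul_smul,
      pow_succ]

def approxSol {B d : ℕ} (A : Fin B → Matrix (Fin d) (Fin d) ℂ) (V : Fin d → ℂ) (μ : ℂ) (K : ℕ)
    (x : ℝ) : Fin d → ℂ :=
  (μ ^ K)⁻¹ • runSum A V K x

section ApproxSol

variable {B d : ℕ} {A : Fin B → Matrix (Fin d) (Fin d) ℂ} {V : Fin d → ℂ} {μ : ℂ} {K : ℕ}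

lemma approxSol_of_neg {x : ℝ} (hx : x < 0) : approxSol A V μ K x = 0 := by
  rw [approxSol, runSum_of_neg A V hx, smul_zero]

lemma approxSol_of_one_le (hQ : (∑ r, A r) *ᵥ V = μ • V) (hB : 0 < B) (hμ : μ ≠ 0) {x : ℝ}
    (hx : 1 ≤ x) : approxSol A V μ K x = V := by
  rw [approxSol, runSum_of_one_le A V hB hx, Matrix.pow_mulVec_of_mulVec_eq_smul hQ, smul_smul,
    inv_mul_cancel₀ (pow_ne_zero K hμ), one_smul]

lemma approxSol_succ_of_mem (hQ : (∑ r, A r) *ᵥ V = μ • V) (hB : 0 < B) (hμ : μ ≠ 0) (r : Fin B)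
    {x : ℝ} (hr : (r : ℝ) / B ≤ x) (hr' : x < ((r : ℝ) + 1) / B) :
    approxSol A V μ (K + 1) x = μ⁻¹ • ((∑ s ∈ Finset.univ.filter (· < r), A s *ᵥ V) +
      A r *ᵥ approxSol A V μ K (B * x - r)) := by
  simp only [approxSol, runSum_succ_of_mem A V hB r hr hr',
    Matrix.pow_mulVec_of_mulVec_eq_smul hQ, Matrix.mulVec_smul, ← Finset.smul_sum, smul_add,
    smul_smul, pow_succ, mul_inv]
  congr 2 <;> field_simp

variable {lam C₀ : ℝ}

lemma norm_approxSol_succ_sub_le (hQ : (∑ r, A r) *ᵥ V = μ • V)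
    (hW : ∀ (K : ℕ) (w : Fin K → Fin B), ‖wordProd A w‖ ≤ C₀ * lam ^ K) (hB : 0 < B)
    (hμ : μ ≠ 0) (x : ℝ) :
    ‖approxSol A V μ (K + 1) x - approxSol A V μ K x‖ ≤
      B * C₀ * ‖V‖ * (lam / ‖μ‖) ^ (K + 1) := by
  have hM (w : Fin (K + 1) → Fin B) : ‖wordProd A w *ᵥ V‖ ≤ C₀ * lam ^ (K + 1) * ‖V‖ :=
    (Matrix.linfty_opNorm_mulVec _ _).trans (by gcongr; exact hW _ w)
  have hdiff : approxSol A V μ (K + 1) x - approxSol A V μ K x =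
      (μ ^ (K + 1))⁻¹ • (runSum A V (K + 1) x - runSum A ((∑ r, A r) *ᵥ V) K x) := by
    rw [hQ, runSum_smul, approxSol, approxSol, smul_sub, smul_smul, pow_succ, mul_inv, mul_assoc,
      inv_mul_cancel₀ hμ, mul_one]
  rw [hdiff, norm_smul, norm_inv, norm_pow]
  calc _ ≤ (‖μ‖ ^ (K + 1))⁻¹ * (B * (C₀ * lam ^ (K + 1) * ‖V‖)) := by
        gcongr
        exact norm_runSum_succ_sub_le A V hB hM x
    _ = _ := by rw [div_pow]; ring

lemma norm_approxSol_sub_le (hW : ∀ (K : ℕ) (w : Fin K → Fin B), ‖wordProd A w‖ ≤ C₀ * lam ^ K)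
    (hB : 0 < B) {x y : ℝ} (hxy : x ≤ y) (hyx : y - x ≤ ((B : ℝ) ^ K)⁻¹) :
    ‖approxSol A V μ K y - approxSol A V μ K x‖ ≤ C₀ * ‖V‖ * (lam / ‖μ‖) ^ K := by
  have hM (w : Fin K → Fin B) : ‖wordProd A w *ᵥ V‖ ≤ C₀ * lam ^ K * ‖V‖ :=
    (Matrix.linfty_opNorm_mulVec _ _).trans (by gcongr; exact hW _ w)
  rw [approxSol, approxSol, ← smul_sub, norm_smul, norm_inv, norm_pow]
  calc _ ≤ (‖μ‖ ^ K)⁻¹ * (C₀ * lam ^ K * ‖V‖) := by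
        gcongr
        exact norm_runSum_sub_le A V hB hM hxy hyx
    _ = _ := by rw [div_pow]; ring

end ApproxSol

def dilationSol {B d : ℕ} (A : Fin B → Matrix (Fin d) (Fin d) ℂ) (V : Fin d → ℂ) (μ : ℂ)
    (x : ℝ) : Fin d → ℂ :=
  limUnder atTop fun K => approxSol A V μ K x

section DilationSol

variable {B d : ℕ} {A : Fin B → Matrix (Fin d) (Fin d) ℂ} {V : Fin d → ℂ} {μ : ℂ} {lam C₀ : ℝ}
  (hW : ∀ (K : ℕ) (w : Fin K → Fin B), ‖wordProd A w‖ ≤ C₀ * lam ^ K) (hB : 0 < B)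
  (hlam : 0 ≤ lam) (hlamμ : lam < ‖μ‖)
include hW hB hlam hlamμ

lemma dist_approxSol_succ_le (hQ : (∑ r, A r) *ᵥ V = μ • V) (x : ℝ) (K : ℕ) :
    dist (approxSol A V μ K x) (approxSol A V μ (K + 1) x) ≤
      B * C₀ * ‖V‖ * (lam / ‖μ‖) * (lam / ‖μ‖) ^ K := by
  rw [dist_comm, dist_eq_norm, mul_assoc _ (lam / ‖μ‖), ← pow_succ']
  exact norm_approxSol_succ_sub_le hQ hW hB (norm_pos_iff.mp (hlam.trans_lt hlamμ)) x

lemma tendsto_approxSol (hQ : (∑ r, A r) *ᵥ V = μ • V) (x : ℝ) :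
    Tendsto (fun K => approxSol A V μ K x) atTop (𝓝 (dilationSol A V μ x)) :=
  (cauchySeq_of_le_geometric _ _ ((div_lt_one (hlam.trans_lt hlamμ)).mpr hlamμ)
    (dist_approxSol_succ_le hW hB hlam hlamμ hQ x)).tendsto_limUnder

lemma exists_norm_dilationSol_sub_le (hQ : (∑ r, A r) *ᵥ V = μ • V) :
    ∃ C : ℝ, 0 ≤ C ∧ ∀ (K : ℕ) {x y : ℝ}, x ≤ y → y - x ≤ ((B : ℝ) ^ K)⁻¹ →
      ‖dilationSol A V μ y - dilationSol A V μ x‖ ≤ C * (lam / ‖μ‖) ^ K := by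
  set q := lam / ‖μ‖
  have hq : q < 1 := (div_lt_one (hlam.trans_lt hlamμ)).mpr hlamμ
  have hq0 : 0 ≤ q := div_nonneg hlam (norm_nonneg μ)
  have hq1 : 0 < 1 - q := sub_pos.mpr hq
  have hC₀ : 0 ≤ C₀ := by simpa using (norm_nonneg _).trans (hW 0 Fin.elim0)
  set Cg := B * C₀ * ‖V‖ * q
  have htail (K : ℕ) (z : ℝ) :
      dist (approxSol A V μ K z) (dilationSol A V μ z) ≤ Cg / (1 - q) * q ^ K := by
    rw [← mul_div_right_comm]
    exact dist_le_of_le_geometric_of_tendsto _ _ hq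
      (dist_approxSol_succ_le hW hB hlam hlamμ hQ z) (tendsto_approxSol hW hB hlam hlamμ hQ z) K
  refine ⟨2 * (Cg / (1 - q)) + C₀ * ‖V‖, by positivity, fun K x y hxy hyx => ?_⟩
  calc ‖dilationSol A V μ y - dilationSol A V μ x‖
      ≤ dist (approxSol A V μ K y) (dilationSol A V μ y) +
          ‖approxSol A V μ K y - approxSol A V μ K x‖ +
          dist (approxSol A V μ K x) (dilationSol A V μ x) := by
        rw [← dist_eq_norm, ← dist_eq_norm, dist_comm (approxSol A V μ K y)]
        exact dist_triangle4 _ _ _ _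
    _ ≤ Cg / (1 - q) * q ^ K + C₀ * ‖V‖ * q ^ K + Cg / (1 - q) * q ^ K := by
        gcongr
        exacts [htail K y, norm_approxSol_sub_le hW hB hxy hyx, htail K x]
    _ = _ := by ring

lemma dilationSol_zero (hQ : (∑ r, A r) *ᵥ V = μ • V) : dilationSol A V μ 0 = 0 := by
  have hlim : Tendsto (fun K => C₀ * ‖V‖ * (lam / ‖μ‖) ^ K) atTop (𝓝 0) := by
    simpa using (tendsto_pow_atTop_nhds_zero_of_lt_one (div_nonneg hlam (norm_nonneg μ))
      ((div_lt_one (hlam.trans_lt hlamμ)).mpr hlamμ)).const_mul (C₀ * ‖V‖)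
  refine tendsto_nhds_unique (tendsto_approxSol hW hB hlam hlamμ hQ 0)
    (squeeze_zero_norm (fun K => ?_) hlim)
  have hneg : -((B : ℝ) ^ K)⁻¹ < 0 := neg_neg_of_pos (by positivity)
  simpa [approxSol_of_neg hneg] using
    norm_approxSol_sub_le (V := V) (μ := μ) hW hB hneg.le (by rw [sub_neg_eq_add, zero_add])

end DilationSol

lemma dilationEq_dilationSol {B d : ℕ} {A : Fin B → Matrix (Fin d) (Fin d) ℂ} {V : Fin d → ℂ}
    {ρ : ℝ} {ω : ℂ} {lam C₀ : ℝ} (hQ : (∑ r, A r) *ᵥ V = ((ρ : ℂ) * ω) • V)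
    (hW : ∀ (K : ℕ) (w : Fin K → Fin B), ‖wordProd A w‖ ≤ C₀ * lam ^ K) (hB : 0 < B)
    (hlam : 0 ≤ lam) (hlamμ : lam < ‖(ρ : ℂ) * ω‖) :
    DilationEq A ρ ω V (dilationSol A V (ρ * ω)) := by
  have hμ : (ρ : ℂ) * ω ≠ 0 := norm_pos_iff.mp (hlam.trans_lt hlamμ)
  have hlim := tendsto_approxSol hW hB hlam hlamμ hQ
  refine ⟨dilationSol_zero hW hB hlam hlamμ hQ, ?_, fun r x hr hr' => ?_⟩
  · refine tendsto_nhds_unique (hlim 1) ?_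
    simp only [approxSol_of_one_le hQ hB hμ le_rfl, tendsto_const_nhds]
  · refine tendsto_nhds_unique ((hlim x).comp (tendsto_add_atTop_nat 1)) ?_
    simp only [Function.comp_def, approxSol_succ_of_mem hQ hB hμ r hr hr']
    have hcont : Continuous fun v : Fin d → ℂ =>
        ((ρ : ℂ) * ω)⁻¹ • ((∑ s ∈ Finset.univ.filter (· < r), A s *ᵥ V) + A r *ᵥ v) := by
      fun_prop
    exact (hcont.tendsto _).comp (hlim _)

lemma norm_sub_le_mul_rpow_of_forall_pow_scale {E : Type*} [SeminormedAddCommGroup E]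
    {f : ℝ → E} {b α C : ℝ} (hb : 1 < b) (hα : 0 ≤ α) (hC : 0 ≤ C)
    (h : ∀ (K : ℕ) {x y : ℝ}, x ≤ y → y - x ≤ (b ^ K)⁻¹ → ‖f y - f x‖ ≤ C * ((b ^ α)⁻¹) ^ K)
    {x y : ℝ} (hxy : |y - x| ≤ 1) : ‖f y - f x‖ ≤ C * b ^ α * |y - x| ^ α := by
  wlog hle : x ≤ y generalizing x y
  · rw [norm_sub_rev, abs_sub_comm]
    exact this (by rwa [abs_sub_comm]) (le_of_not_ge hle)
  rcases hle.eq_or_lt with rfl | hlt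
  · simp only [sub_self, norm_zero, abs_zero]
    positivity
  have hb0 : 0 < b := zero_lt_one.trans hb
  have ht : 0 < y - x := sub_pos.mpr hlt
  rw [abs_of_pos ht] at hxy ⊢
  obtain ⟨K, hK, hK'⟩ := exists_nat_pow_near ((one_le_inv₀ ht).mpr hxy) hb
  calc ‖f y - f x‖ ≤ C * ((b ^ α)⁻¹) ^ K :=
        h K hle ((le_inv_comm₀ ht (pow_pos hb0 K)).mpr hK)
    _ = C * ((b ^ K)⁻¹) ^ α := by
        rw [← Real.inv_rpow hb0.le, ← Real.rpow_mul_natCast (by positivity), ← inv_pow,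
          ← Real.rpow_natCast_mul (by positivity), mul_comm (K : ℝ) α]
    _ ≤ C * (b * (y - x)) ^ α := by
        gcongr
        have := (inv_lt_iff_one_lt_mul₀ ht).mp hK'
        rw [inv_le_iff_one_le_mul₀ (pow_pos hb0 K)]
        linarith [show b ^ (K + 1) * (y - x) = b * (y - x) * b ^ K by ring]
    _ = C * b ^ α * (y - x) ^ α := by rw [Real.mul_rpow hb0.le ht.le, mul_assoc]

lemma continuousOn_of_norm_sub_le_mul_rpow {E : Type*} [SeminormedAddCommGroup E] {f : ℝ → E}
    {s : Set ℝ} {c α : ℝ} (hα : 0 < α)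
    (h : ∀ x ∈ s, ∀ y ∈ s, ‖f y - f x‖ ≤ c * |y - x| ^ α) : ContinuousOn f s := by
  refine HolderOnWith.continuousOn (C := c.toNNReal) (r := α.toNNReal) (fun x hx y hy => ?_)
    (Real.toNNReal_pos.mpr hα)
  have := ENNReal.ofReal_le_ofReal (h y hy x hx)
  rw [ENNReal.ofReal_mul' (by positivity), ← ENNReal.ofReal_rpow_of_nonneg (abs_nonneg _) hα.le,
    ← Real.dist_eq, ← dist_eq_norm, ← edist_dist, ← edist_dist] at this
  rwa [Real.coe_toNNReal _ hα.le]

lemma exists_digit {B : ℕ} (hB : 0 < B) {x : ℝ} (hx : x ∈ Set.Ico (0 : ℝ) 1) :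
    ∃ r : Fin B, (r : ℝ) / B ≤ x ∧ x < ((r : ℝ) + 1) / B ∧ B * x - r ∈ Set.Ico (0 : ℝ) 1 := by
  have hB' : (0 : ℝ) < B := by exact_mod_cast hB
  have hBx : 0 ≤ B * x := mul_nonneg hB'.le hx.1
  have hlt : ⌊B * x⌋₊ < B := (Nat.floor_lt hBx).mpr (by nlinarith [hx.2])
  have h1 := Nat.floor_le hBx
  have h2 := Nat.lt_floor_add_one (B * x)
  refine ⟨⟨⌊B * x⌋₊, hlt⟩, ?_, ?_, ?_, ?_⟩ <;> simp only
  · rw [div_le_iff₀ hB']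
    linarith
  · rw [lt_div_iff₀ hB']
    linarith
  · linarith
  · linarith

section Uniqueness

variable {B d : ℕ} {A : Fin B → Matrix (Fin d) (Fin d) ℂ} {ρ : ℝ} {ω : ℂ} {V : Fin d → ℂ}
  {Φ Ψ : ℝ → Fin d → ℂ}

lemma DilationEq.exists_sub_eq_smul_wordProd_mulVec (hB : 0 < B) (hΦ : DilationEq A ρ ω V Φ)
    (hΨ : DilationEq A ρ ω V Ψ) (K : ℕ) {x : ℝ} (hx : x ∈ Set.Ico (0 : ℝ) 1) :
    ∃ w : Fin K → Fin B, ∃ y ∈ Set.Ico (0 : ℝ) 1,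
      Φ x - Ψ x = (((ρ : ℂ) * ω) ^ K)⁻¹ • (wordProd A w *ᵥ (Φ y - Ψ y)) := by
  induction K generalizing x with
  | zero => exact ⟨Fin.elim0, x, hx, by simp⟩
  | succ K ih =>
    obtain ⟨r, hr, hr', hrx⟩ := exists_digit hB hx
    obtain ⟨w, y, hy, hxy⟩ := ih hrx
    refine ⟨Fin.cons r w, y, hy, ?_⟩
    rw [hΦ.2.2 r x hr hr', hΨ.2.2 r x hr hr', ← smul_sub, add_sub_add_left_eq_sub,
      ← Matrix.mulVec_sub, hxy, Matrix.mulVec_smul, smul_smul, wordProd_cons,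
      ← Matrix.mulVec_mulVec]
    congr 1
    ring

lemma DilationEq.eqOn {lam C₀ : ℝ}
    (hW : ∀ (K : ℕ) (w : Fin K → Fin B), ‖wordProd A w‖ ≤ C₀ * lam ^ K) (hB : 0 < B)
    (hlam : 0 ≤ lam) (hlamμ : lam < ‖(ρ : ℂ) * ω‖) (hΦ : DilationEq A ρ ω V Φ)
    (hΨ : DilationEq A ρ ω V Ψ) (hΦc : ContinuousOn Φ (Set.Icc 0 1))
    (hΨc : ContinuousOn Ψ (Set.Icc 0 1)) : Set.EqOn Φ Ψ (Set.Icc 0 1) := by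
  intro x hx
  rcases hx.2.lt_or_eq with hx1 | rfl
  swap
  · exact hΦ.2.1.trans hΨ.2.1.symm
  obtain ⟨M, hM⟩ := isCompact_Icc.exists_bound_of_continuousOn (hΦc.sub hΨc)
  have hμ : 0 < ‖(ρ : ℂ) * ω‖ := hlam.trans_lt hlamμ
  have hC₀ : 0 ≤ C₀ := by simpa using (norm_nonneg _).trans (hW 0 Fin.elim0)
  set q := lam / ‖(ρ : ℂ) * ω‖
  have hbound (K : ℕ) : ‖Φ x - Ψ x‖ ≤ C₀ * M * q ^ K := by
    obtain ⟨w, y, hy, hxy⟩ := hΦ.exists_sub_eq_smul_wordProd_mulVec hB hΨ K ⟨hx.1, hx1⟩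
    rw [hxy, norm_smul, norm_inv, norm_pow, div_pow, inv_mul_le_iff₀ (pow_pos hμ K)]
    calc ‖wordProd A w *ᵥ (Φ y - Ψ y)‖ ≤ ‖wordProd A w‖ * ‖Φ y - Ψ y‖ :=
          Matrix.linfty_opNorm_mulVec _ _
      _ ≤ C₀ * lam ^ K * M := mul_le_mul (hW K w) (hM y (Set.Ico_subset_Icc_self hy))
          (norm_nonneg _) (mul_nonneg hC₀ (pow_nonneg hlam K))
      _ = _ := by field_simp [hμ.ne']
  have hlim : Tendsto (fun K => C₀ * M * q ^ K) atTop (𝓝 0) := by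
    simpa only [mul_zero] using (tendsto_pow_atTop_nhds_zero_of_lt_one
      (div_nonneg hlam hμ.le) ((div_lt_one hμ).mpr hlamμ)).const_mul (C₀ * M)
  exact sub_eq_zero.mp (norm_le_zero_iff.mp (ge_of_tendsto' hlim hbound))

end Uniqueness

theorem dilation_solution_holder_jsr_general (B d : ℕ) (hB : 2 ≤ B)
    (A : Fin B → Matrix (Fin d) (Fin d) ℂ)
    (ρ : ℝ) (hρ : 0 < ρ) (ω : ℂ) (hω : ‖ω‖ = 1)
    (V : Fin d → ℂ) (hV : (∑ r, A r).mulVec V = ((ρ : ℂ) * ω) • V)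
    -- hypothesis (jsr_λ)
    (lam : ℝ) (hlam : 0 < lam) (hlamρ : lam < ρ)
    (hjsr : ∃ T : ℕ, 1 ≤ T ∧ ∀ w : Fin T → Fin B, ‖wordProd A w‖ ≤ lam ^ T) :
    ∃ F : ℝ → Fin d → ℂ,
      ContinuousOn F (Set.Icc 0 1) ∧ DilationEq A ρ ω V F ∧
      (∀ Ψ : ℝ → Fin d → ℂ, ContinuousOn Ψ (Set.Icc 0 1) → DilationEq A ρ ω V Ψ →
        Set.EqOn Ψ F (Set.Icc 0 1)) ∧
      ∃ c : ℝ, 0 ≤ c ∧ ∀ x ∈ Set.Icc (0:ℝ) 1, ∀ y ∈ Set.Icc (0:ℝ) 1,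
        ‖F y - F x‖ ≤ c * |y - x| ^ Real.logb B (ρ / lam) := by
  obtain ⟨T, hT, hjsrT⟩ := hjsr
  obtain ⟨C₀, hW⟩ := exists_norm_wordProd_le A hlam hT hjsrT
  have hB0 : 0 < B := by omega
  have hB1 : (1 : ℝ) < B := by exact_mod_cast hB
  have hμ : ‖(ρ : ℂ) * ω‖ = ρ := by
    rw [norm_mul, hω, mul_one, Complex.norm_real, Real.norm_of_nonneg hρ.le]
  have hlamμ : lam < ‖(ρ : ℂ) * ω‖ := by rwa [hμ]
  have hα : 0 < Real.logb B (ρ / lam) := Real.logb_pos hB1 ((one_lt_div hlam).mpr hlamρ)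
  have hq : ((B : ℝ) ^ Real.logb B (ρ / lam))⁻¹ = lam / ‖(ρ : ℂ) * ω‖ := by
    rw [Real.rpow_logb (by positivity) hB1.ne' (div_pos hρ hlam), inv_div, hμ]
  have hFeq := dilationEq_dilationSol hV hW hB0 hlam.le hlamμ
  obtain ⟨C, hC, hscale⟩ := exists_norm_dilationSol_sub_le hW hB0 hlam.le hlamμ hV
  have hHolder : ∀ x ∈ Set.Icc (0 : ℝ) 1, ∀ y ∈ Set.Icc (0 : ℝ) 1,
      ‖dilationSol A V (ρ * ω) y - dilationSol A V (ρ * ω) x‖ ≤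
        C * B ^ Real.logb B (ρ / lam) * |y - x| ^ Real.logb B (ρ / lam) :=
    fun x hx y hy => norm_sub_le_mul_rpow_of_forall_pow_scale hB1 hα.le hC (hq ▸ hscale)
      (abs_sub_le_iff.mpr ⟨by linarith [hx.1, hy.2], by linarith [hx.2, hy.1]⟩)
  have hFc := continuousOn_of_norm_sub_le_mul_rpow hα hHolder
  exact ⟨_, hFc, hFeq, fun Ψ hΨc hΨ => hΨ.eqOn hW hB0 hlam.le hlamμ hFeq hΨc hFc, _,
    by positivity, hHolder⟩

/-- under (jsr_λ) with `λ < ρ`, the unique continuous solution of the basic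
dilation equation is Hölder with exponent `log_B(ρ/λ)`. -/
theorem dilation_solution_holder_jsr (B d : ℕ) (hB : 2 ≤ B) (hd : 1 ≤ d)
    (A : Fin B → Matrix (Fin d) (Fin d) ℂ)
    (ρ : ℝ) (hρ : 0 < ρ) (ω : ℂ) (hω : ‖ω‖ = 1)
    (V : Fin d → ℂ) (hV : (∑ r, A r).mulVec V = ((ρ : ℂ) * ω) • V)
    -- hypothesis (jsr_λ)
    (lam : ℝ) (hlam : 0 < lam) (hlamρ : lam < ρ)
    (hjsr : ∃ T : ℕ, 1 ≤ T ∧ ∀ w : Fin T → Fin B, ‖wordProd A w‖ ≤ lam ^ T) :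
    ∃ F : ℝ → Fin d → ℂ,
      ContinuousOn F (Set.Icc 0 1) ∧ DilationEq A ρ ω V F ∧
      (∀ Ψ : ℝ → Fin d → ℂ, ContinuousOn Ψ (Set.Icc 0 1) → DilationEq A ρ ω V Ψ →
        Set.EqOn Ψ F (Set.Icc 0 1)) ∧
      ∃ c : ℝ, 0 ≤ c ∧ ∀ x ∈ Set.Icc (0:ℝ) 1, ∀ y ∈ Set.Icc (0:ℝ) 1,
        ‖F y - F x‖ ≤ c * |y - x| ^ Real.logb B (ρ / lam) :=
  dilation_solution_holder_jsr_general B d hB A ρ hρ ω hω V hV lam hlam hlamρ hjsr
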